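/- Let X be a CW complex with cells indexed by I, and let x ∈ X. The sets U_f(x), as f ranges over all functions I → ℕ, form a neighbourhood base of open sets at x: each U_f(x) is open, contains x, and every open neighbourhood of x contains some U_f(x). -/

import Mathlib

open Set Metric Topology

/-- Eventual domination of functions `ℕ → ℕ`. -/
def EvDom (f g : ℕ → ℕ) : Prop := ∀ᶠ n in Filter.atTop, f n ≤ g n

/-- The bounding number `𝔟`: the least cardinality of a family of functions `ℕ → ℕ`
unbounded with respect to eventual domination. -/
noncomputable def boundingNumber : Cardinal :=
  sInf {c : Cardinal | ∃ F : Set (ℕ → ℕ), Cardinal.mk F = c ∧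
    ∀ g : ℕ → ℕ, ∃ f ∈ F, ¬ EvDom f g}

/-- A cell decomposition of a Hausdorff space: characteristic maps from closed discs,
restricting to homeomorphisms onto their images on the open discs, with the open cells
partitioning the space, satisfying closure-finiteness. -/
structure CellStruct (X : Type) [TopologicalSpace X] where
  ι : Type
  dim : ι → ℕ
  map : (i : ι) → EuclideanSpace ℝ (Fin (dim i)) → X
  continuousOn : ∀ i, ContinuousOn (map i) (closedBall 0 1)
  isEmbedding : ∀ i, IsEmbedding ((ball (0 : EuclideanSpace ℝ (Fin (dim i))) 1).restrict (map i))
  pairwiseDisjoint :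
    Pairwise fun i j => Disjoint (map i '' ball 0 1) (map j '' ball 0 1)
  iUnion_eq : ⋃ i, map i '' ball 0 1 = univ
  closureFinite : ∀ i, ∃ F : Finset ι, (∀ j ∈ F, dim j < dim i) ∧
    map i '' sphere 0 1 ⊆ ⋃ j ∈ F, map j '' ball 0 1

namespace CellStruct

variable {X : Type} [TopologicalSpace X]

/-- The open cell with index `i`. -/
def openCell (C : CellStruct X) (i : C.ι) : Set X := C.map i '' ball 0 1

/-- The closed cell with index `i`. -/
def closedCell (C : CellStruct X) (i : C.ι) : Set X := C.map i '' closedBall 0 1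

/-- The image of the boundary sphere of the cell with index `i`. -/
def sphereImage (C : CellStruct X) (i : C.ι) : Set X := C.map i '' sphere 0 1

/-- The cell structure has the weak topology: a set is closed iff its intersection with
every closed cell is closed. -/
def HasWeakTopology (C : CellStruct X) : Prop :=
  ∀ A : Set X, IsClosed A ↔ ∀ i, IsClosed (A ∩ C.closedCell i)

end CellStruct

/-- A CW structure on a (Hausdorff) space: a cell decomposition with closure-finiteness,
such that the topology is the weak topology determined by the closed cells. -/
structure CWStruct (X : Type) [TopologicalSpace X] extends CellStruct X where
  weakTopology : toCellStruct.HasWeakTopology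

namespace CWStruct

variable {X : Type} [TopologicalSpace X]

/-- A subcomplex: a union of open cells containing the closure of each of its cells. -/
def IsSubcomplex (C : CWStruct X) (A : Set X) : Prop :=
  (∃ J : Set C.ι, A = ⋃ j ∈ J, C.openCell j) ∧
    ∀ i, C.openCell i ⊆ A → C.closedCell i ⊆ A

/-- The set of (indices of) cells of a subcomplex `A`. -/
def cells (C : CWStruct X) (A : Set X) : Set C.ι := {i | C.openCell i ⊆ A}

/-- `X` is locally less than `κ`: every point is in the interior of a subcomplex
with fewer than `κ` many cells. -/
def LocallyLT (C : CWStruct X) (κ : Cardinal) : Prop :=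
  ∀ x : X, ∃ A : Set X, C.IsSubcomplex A ∧ Cardinal.mk (C.cells A) < κ ∧ x ∈ interior A

/-- Locally finite: every point is in the interior of a finite subcomplex. -/
def LocallyFinite (C : CWStruct X) : Prop := C.LocallyLT Cardinal.aleph0

/-- Locally countable: every point is in the interior of a countable subcomplex. -/
def LocallyCountable (C : CWStruct X) : Prop := C.LocallyLT (Cardinal.aleph 1)

end CWStruct

/-- `E` is a CW structure on `X × Y` (with the product topology) whose cells are
exactly the products of cells of `C` and `D`, with the corresponding dimensions.
The existence of such an `E` expresses that the product topology on `X × Y`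
makes it a CW complex with the product cell structure. -/
def IsProductCWStruct {X Y : Type} [TopologicalSpace X] [TopologicalSpace Y]
    (C : CWStruct X) (D : CWStruct Y) (E : CWStruct (X × Y)) : Prop :=
  (∀ k : E.ι, ∃ (a : C.ι) (b : D.ι),
      E.openCell k = C.openCell a ×ˢ D.openCell b ∧ E.dim k = C.dim a + D.dim b) ∧
  (∀ (a : C.ι) (b : D.ι), ∃ k : E.ι, E.openCell k = C.openCell a ×ˢ D.openCell b)

/-- A space is compactly generated: a set is closed whenever its intersection with
every compact subset is closed in the subspace topology. -/
def IsKSpace (X : Type) [TopologicalSpace X] : Prop :=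
  ∀ A : Set X, (∀ K : Set X, IsCompact K → IsClosed ((Subtype.val ⁻¹' A : Set K))) → IsClosed A

namespace CWStruct

variable {X : Type} [TopologicalSpace X]

/-- The collar neighbourhood `C^e_n(U)` inside the closed cell `e`:
the image of `{t • z : t ∈ (n/(n+1), 1], z ∈ Sᵈ, φ_e z ∈ U}` under `φ_e`. -/
noncomputable def collar (C : CWStruct X) (e : C.ι) (n : ℕ) (U : Set X) : Set X :=
  C.map e '' {p | ∃ t ∈ Set.Ioc ((n : ℝ) / (n + 1)) 1,
    ∃ z : EuclideanSpace ℝ (Fin (C.dim e)), ‖z‖ = 1 ∧ C.map e z ∈ U ∧ p = t • z}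

/-- The basic neighbourhood `B_n(x)` of `x = φ_{i₀} z` inside its open cell: the image of
the open ball about `z` of radius `min (1/(n+1)) ((1 - ‖z‖)/2)`. -/
noncomputable def ballNbhd (C : CWStruct X) (i₀ : C.ι)
    (z : EuclideanSpace ℝ (Fin (C.dim i₀))) (n : ℕ) : Set X :=
  C.map i₀ '' Metric.ball z (min (1 / (n + 1)) ((1 - ‖z‖) / 2))

open Classical in
/-- The part of the neighbourhood `U_f(x)` lying in the `n`-skeleton, defined by recursion
on dimension: start with `B_{f i₀}(x)` in dimension `dim i₀` (with the empty set in every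
other cell of dimension at most `dim i₀`), and extend through each cell of each higher
dimension by the collar neighbourhoods `C^e_{f e}(·)`. -/
noncomputable def nbhdSkel (C : CWStruct X) (i₀ : C.ι)
    (z : EuclideanSpace ℝ (Fin (C.dim i₀))) (f : C.ι → ℕ) : ℕ → Set X
  | 0 => if C.dim i₀ = 0 then C.ballNbhd i₀ z (f i₀) else ∅
  | n + 1 =>
      (if C.dim i₀ = n + 1 then C.ballNbhd i₀ z (f i₀) else ∅) ∪
      C.nbhdSkel i₀ z f n ∪
      ⋃ e : C.ι, if C.dim e = n + 1 then C.collar e (f e) (C.nbhdSkel i₀ z f n) else ∅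

/-- The open neighbourhood `U_f(x)` of `x = φ_{i₀} z` determined by `f : ι → ℕ`. -/
noncomputable def nbhd (C : CWStruct X) (i₀ : C.ι)
    (z : EuclideanSpace ℝ (Fin (C.dim i₀))) (f : C.ι → ℕ) : Set X :=
  ⋃ n, C.nbhdSkel i₀ z f n

end CWStruct

/-!
Openness is checked cell by cell, by induction on dimension. On the closed disc of a cell `e`,
the preimage of `U_f(x)` is the small ball about `φ⁻¹(x)` (when `e = e_{i₀}`) together with the
radial cone of height `1/(f e + 1)` over the preimage of `U_f(x) ∩ ∂e`; the latter is relatively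
open by induction, and radial projection is continuous away from the centre.

For the basis property, given an open `V ∋ x`, choose `f` by recursion on dimension so that the
closure of `U_f(x) ∩ ē` lies in `V` for every cell `e`. The closure of `U_f(x) ∩ ∂e` lies in `V`
by closure-finiteness, so its pullback to the sphere is a compact subset of the open set
`φ_e⁻¹(V)`; a thin enough collar over it lies in a closed thickening of that compact set inside
`φ_e⁻¹(V)`. As `U_f(x) ∩ ē` only depends on `f` on cells of dimension at most `dim e`, the
successive choices assemble into a single `f`.
-/

lemma div_add_one_nonneg (m : ℕ) : (0 : ℝ) ≤ m / (m + 1) := by positivity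

theorem exists_limit_of_graded_steps {ι α : Type*} (d : ι → ℕ) (P : ℕ → (ι → α) → Prop)
    {f₀ : ι → α} (h₀ : P 0 f₀)
    (step : ∀ n f, P n f → ∃ f', P (n + 1) f' ∧ ∀ i, d i < n → f' i = f i) :
    ∃ f : ι → α, ∀ n, ∃ g, P n g ∧ ∀ i, d i < n → g i = f i := by
  choose F hF hFagree using step
  let seq : (n : ℕ) → {g // P n g} := fun n =>
    Nat.rec ⟨f₀, h₀⟩ (fun n g => ⟨F n g.1 g.2, hF n g.1 g.2⟩) n
  refine ⟨fun i => (seq (d i + 1)).1 i, fun n => ⟨(seq n).1, (seq n).2, ?_⟩⟩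
  induction n with
  | zero => exact fun i hi => absurd hi (Nat.not_lt_zero _)
  | succ n IH =>
    intro i hi
    rcases (Nat.lt_succ_iff.1 hi).lt_or_eq with hi | rfl
    · exact (hFagree n _ _ i hi).trans (IH i hi)
    · rfl

namespace CWStruct

variable {X : Type} [TopologicalSpace X]

def skel (C : CWStruct X) (n : ℕ) : Set X := ⋃ i ∈ {i : C.ι | C.dim i ≤ n}, C.openCell i

section

variable {C : CWStruct X}

lemma openCell_subset_skel {i : C.ι} {n : ℕ} (h : C.dim i ≤ n) : C.openCell i ⊆ C.skel n :=
  subset_biUnion_of_mem (u := C.openCell) h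

lemma skel_mono : Monotone C.skel := fun _ _ h =>
  biUnion_mono (fun _ hi => le_trans hi h) fun _ _ => subset_rfl

lemma openCell_subset_closedCell (i : C.ι) : C.openCell i ⊆ C.closedCell i :=
  image_mono ball_subset_closedBall

lemma closedCell_eq_union (i : C.ι) : C.closedCell i = C.openCell i ∪ C.sphereImage i := by
  rw [CellStruct.closedCell, CellStruct.openCell, CellStruct.sphereImage, ← image_union,
    ball_union_sphere]

lemma disjoint_openCell {i j : C.ι} (h : i ≠ j) : Disjoint (C.openCell i) (C.openCell j) :=
  C.pairwiseDisjoint h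

lemma disjoint_openCell_skel {i : C.ι} {n : ℕ} (h : n < C.dim i) :
    Disjoint (C.openCell i) (C.skel n) :=
  disjoint_iUnion₂_right.2 fun _ hj => disjoint_openCell (by rintro rfl; exact absurd hj h.not_ge)

lemma sphereImage_subset_skel {i : C.ι} {n : ℕ} (h : C.dim i ≤ n + 1) :
    C.sphereImage i ⊆ C.skel n := by
  obtain ⟨F, hF, hsub⟩ := C.closureFinite i
  exact hsub.trans (iUnion₂_subset fun j hj => openCell_subset_skel (by have := hF j hj; omega))

lemma closedCell_subset_skel {i : C.ι} {n : ℕ} (h : C.dim i ≤ n) : C.closedCell i ⊆ C.skel n := by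
  rw [closedCell_eq_union]
  exact union_subset (openCell_subset_skel h) (sphereImage_subset_skel (by omega))

lemma disjoint_openCell_sphereImage (i : C.ι) : Disjoint (C.openCell i) (C.sphereImage i) := by
  obtain ⟨F, hF, hsub⟩ := C.closureFinite i
  refine Disjoint.mono_right hsub (disjoint_iUnion₂_right.2 fun j hj => disjoint_openCell ?_)
  rintro rfl
  exact (hF i hj).false

lemma injOn_ball (i : C.ι) : InjOn (C.map i) (ball 0 1) := fun _ hw _ hw' h =>
  congrArg Subtype.val ((C.isEmbedding i).injective (a₁ := ⟨_, hw⟩) (a₂ := ⟨_, hw'⟩) h)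

lemma isClosed_image [T2Space X] (i : C.ι) {K : Set (EuclideanSpace ℝ (Fin (C.dim i)))}
    (hK : IsClosed K) (hsub : K ⊆ closedBall 0 1) : IsClosed (C.map i '' K) :=
  (((isCompact_closedBall _ _).of_isClosed_subset hK hsub).image_of_continuousOn
    ((C.continuousOn i).mono hsub)).isClosed

lemma isClosed_sphereImage [T2Space X] (i : C.ι) : IsClosed (C.sphereImage i) :=
  isClosed_image i isClosed_sphere sphere_subset_closedBall

lemma isClosed_sphereImage_diff [T2Space X] {S : Set X} (i : C.ι)
    (h : ∀ j, C.dim j < C.dim i → IsClosed (C.closedCell j \ S)) :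
    IsClosed (C.sphereImage i \ S) := by
  obtain ⟨F, hF, hsub⟩ := C.closureFinite i
  have : C.sphereImage i \ S = C.sphereImage i ∩ ⋃ j ∈ F, (C.closedCell j \ S) := by
    ext y
    simp only [mem_sdiff, mem_inter_iff, mem_iUnion, exists_prop]
    constructor
    · rintro ⟨hy, hyS⟩
      obtain ⟨j, hj, hyj⟩ := mem_iUnion₂.1 (hsub hy)
      exact ⟨hy, j, hj, openCell_subset_closedCell j hyj, hyS⟩
    · rintro ⟨hy, -, -, -, hyS⟩
      exact ⟨hy, hyS⟩
  rw [this]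
  exact (isClosed_sphereImage i).inter (isClosed_biUnion_finset fun j hj => h j (hF j hj))

/-- The hypothesis on `sphereImage i` is supplied by induction on the dimension of `i`. -/
theorem isOpen_of_forall_cell [T2Space X] {S : Set X}
    (h : ∀ i, IsClosed (C.sphereImage i \ S) → ∃ O, IsOpen O ∧
      closedBall 0 1 ∩ C.map i ⁻¹' S = closedBall 0 1 ∩ O) : IsOpen S := by
  suffices H : ∀ d, ∀ i : C.ι, C.dim i = d → IsClosed (C.closedCell i \ S) by
    rw [← isClosed_compl_iff, C.weakTopology]
    exact fun i => by simpa only [inter_comm, sdiff_eq] using H _ i rfl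
  intro d
  induction d using Nat.strong_induction_on with
  | _ d IH =>
    rintro i rfl
    obtain ⟨O, hO, hSO⟩ := h i (isClosed_sphereImage_diff i fun j hj => IH _ hj j rfl)
    have : C.closedCell i \ S = C.map i '' (closedBall 0 1 \ O) := by
      rw [CellStruct.closedCell, sdiff_eq, ← image_inter_preimage, preimage_compl, sdiff_eq]
      congr 1
      ext w
      have := congrArg (w ∈ ·) hSO
      simp only [mem_inter_iff, mem_preimage, eq_iff_iff] at this
      simp only [mem_inter_iff, mem_compl_iff]
      tauto
    rw [this]
    exact isClosed_image i (isClosed_closedBall.sdiff hO) sdiff_subset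

lemma sphereImage_eq_empty {i : C.ι} (h : C.dim i = 0) : C.sphereImage i = ∅ := by
  obtain ⟨F, hF, hsub⟩ := C.closureFinite i
  refine subset_empty_iff.1 (hsub.trans (iUnion₂_subset fun j hj => ?_))
  exact absurd (hF j hj) (by omega)

lemma ball_min_subset_ball_one {d : ℕ} (z : EuclideanSpace ℝ (Fin d)) (r : ℝ) :
    ball z (min r ((1 - ‖z‖) / 2)) ⊆ ball 0 1 := fun w hw => by
  have hwz : dist w z < (1 - ‖z‖) / 2 := (mem_ball.1 hw).trans_le (min_le_right _ _)
  have := norm_le_norm_add_norm_sub' w z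
  rw [mem_ball_zero_iff]
  linarith [dist_nonneg (x := w) (y := z), dist_eq_norm w z]

lemma ballNbhd_subset_openCell (i₀ : C.ι) (z : EuclideanSpace ℝ (Fin (C.dim i₀))) (m : ℕ) :
    C.ballNbhd i₀ z m ⊆ C.openCell i₀ :=
  image_mono (ball_min_subset_ball_one z _)

lemma ballNbhd_anti (i₀ : C.ι) (z : EuclideanSpace ℝ (Fin (C.dim i₀))) {m m' : ℕ}
    (h : m ≤ m') : C.ballNbhd i₀ z m' ⊆ C.ballNbhd i₀ z m :=
  image_mono <| ball_subset_ball <| min_le_min_right _ <|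
    one_div_le_one_div_of_le (by positivity) (by exact_mod_cast Nat.succ_le_succ h)

lemma mem_ballNbhd_self {i₀ : C.ι} {z : EuclideanSpace ℝ (Fin (C.dim i₀))} (hz : ‖z‖ < 1)
    (m : ℕ) : C.map i₀ z ∈ C.ballNbhd i₀ z m :=
  mem_image_of_mem _ (mem_ball_self (lt_min (by positivity) (by linarith)))

lemma ite_ballNbhd_inter_openCell (i₀ : C.ι) (z : EuclideanSpace ℝ (Fin (C.dim i₀))) (m : ℕ)
    {e : C.ι} {n : ℕ} (he : C.dim e = n) :
    (if C.dim i₀ = n then C.ballNbhd i₀ z m else ∅) ∩ C.openCell e =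
      C.ballNbhd i₀ z m ∩ C.openCell e := by
  split_ifs with h
  · rfl
  · have hne : i₀ ≠ e := by rintro rfl; exact h he
    rw [empty_inter, ((disjoint_openCell hne).mono_left
      (ballNbhd_subset_openCell i₀ z m)).inter_eq]

lemma collar_subset_closedCell (e : C.ι) (m : ℕ) (S : Set X) :
    C.collar e m S ⊆ C.closedCell e := by
  refine image_mono ?_
  rintro _ ⟨t, ⟨hta, ht1⟩, u, hu, -, rfl⟩
  rw [mem_closedBall_zero_iff, norm_smul, hu, mul_one, Real.norm_of_nonneg
    ((div_add_one_nonneg m).trans hta.le)]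
  exact ht1

lemma collar_anti (e : C.ι) {m m' : ℕ} (h : m ≤ m') (S : Set X) :
    C.collar e m' S ⊆ C.collar e m S := by
  refine image_mono ?_
  rintro _ ⟨t, ⟨hta, ht1⟩, u, hu, huS, rfl⟩
  refine ⟨t, ⟨lt_of_le_of_lt ?_ hta, ht1⟩, u, hu, huS, rfl⟩
  rw [div_le_div_iff₀ (by positivity) (by positivity)]
  have : (m : ℝ) ≤ m' := by exact_mod_cast h
  nlinarith

lemma collar_congr (e : C.ι) (m : ℕ) {S S' : Set X}
    (h : S ∩ C.sphereImage e = S' ∩ C.sphereImage e) : C.collar e m S = C.collar e m S' := by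
  have key : ∀ u : EuclideanSpace ℝ (Fin (C.dim e)), ‖u‖ = 1 →
      (C.map e u ∈ S ↔ C.map e u ∈ S') := fun u hu => by
    have hs : C.map e u ∈ C.sphereImage e := mem_image_of_mem _ (mem_sphere_zero_iff_norm.2 hu)
    have := congrArg (C.map e u ∈ ·) h
    simp only [mem_inter_iff, hs, and_true, eq_iff_iff] at this
    exact this
  unfold collar
  congr 1
  ext p
  refine exists_congr fun t => and_congr_right fun _ => exists_congr fun u => ?_
  exact ⟨fun ⟨hu, hS, hp⟩ => ⟨hu, (key u hu).1 hS, hp⟩,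
    fun ⟨hu, hS, hp⟩ => ⟨hu, (key u hu).2 hS, hp⟩⟩

lemma collar_subset_union (e : C.ι) (m : ℕ) (S : Set X) :
    C.collar e m S ⊆ C.openCell e ∪ (S ∩ C.sphereImage e) := by
  rintro _ ⟨_, ⟨t, ⟨hta, ht1⟩, u, hu, huS, rfl⟩, rfl⟩
  have ht0 : 0 < t := (div_add_one_nonneg m).trans_lt hta
  rcases ht1.lt_or_eq with ht1 | rfl
  · refine Or.inl (mem_image_of_mem _ (mem_ball_zero_iff.2 ?_))
    rwa [norm_smul, hu, mul_one, Real.norm_of_nonneg ht0.le]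
  · rw [one_smul]
    exact Or.inr ⟨huS, mem_image_of_mem _ (mem_sphere_zero_iff_norm.2 hu)⟩

lemma map_mem_collar_iff {e : C.ι} {m : ℕ} {S : Set X} {w : EuclideanSpace ℝ (Fin (C.dim e))}
    (hw : w ∈ ball 0 1) :
    C.map e w ∈ C.collar e m S ↔ m / (m + 1) < ‖w‖ ∧ C.map e (‖w‖⁻¹ • w) ∈ S := by
  constructor
  · rintro ⟨_, ⟨t, ⟨hta, ht1⟩, u, hu, huS, rfl⟩, hwt⟩
    have ht0 : 0 < t := (div_add_one_nonneg m).trans_lt hta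
    have hnorm : ‖t • u‖ = t := by rw [norm_smul, hu, mul_one, Real.norm_of_nonneg ht0.le]
    have htu : t • u ∈ ball (0 : EuclideanSpace ℝ (Fin (C.dim e))) 1 := by
      rw [mem_ball_zero_iff, hnorm]
      refine ht1.lt_of_ne ?_
      rintro rfl
      rw [one_smul] at hwt
      exact (disjoint_openCell_sphereImage e).ne_of_mem (mem_image_of_mem _ hw)
        (mem_image_of_mem _ (mem_sphere_zero_iff_norm.2 hu)) hwt.symm
    obtain rfl := injOn_ball e htu hw hwt
    rw [hnorm, smul_smul, inv_mul_cancel₀ ht0.ne', one_smul]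
    exact ⟨hta, huS⟩
  · rintro ⟨hwm, hwS⟩
    have hw0 : ‖w‖ ≠ 0 := ((div_add_one_nonneg m).trans_lt hwm).ne'
    refine ⟨_, ⟨‖w‖, ⟨hwm, (mem_ball_zero_iff.1 hw).le⟩, ‖w‖⁻¹ • w, ?_, hwS, ?_⟩, rfl⟩
    · rw [norm_smul, norm_inv, norm_norm, inv_mul_cancel₀ hw0]
    · rw [smul_smul, mul_inv_cancel₀ hw0, one_smul]

variable {i₀ : C.ι} {z : EuclideanSpace ℝ (Fin (C.dim i₀))}

section

variable (f : C.ι → ℕ)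

lemma nbhdSkel_subset_skel : ∀ n, C.nbhdSkel i₀ z f n ⊆ C.skel n
  | 0 => by
    rw [nbhdSkel]
    split_ifs with h
    · exact (ballNbhd_subset_openCell i₀ z _).trans (openCell_subset_skel h.le)
    · exact empty_subset _
  | n + 1 => by
    rw [nbhdSkel]
    refine union_subset (union_subset ?_ ?_) (iUnion_subset fun e => ?_)
    · split_ifs with h
      · exact (ballNbhd_subset_openCell i₀ z _).trans (openCell_subset_skel h.le)
      · exact empty_subset _
    · exact (nbhdSkel_subset_skel n).trans (skel_mono n.le_succ)
    split_ifs with h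
    · exact (collar_subset_closedCell e _ _).trans (closedCell_subset_skel h.le)
    · exact empty_subset _

lemma nbhdSkel_subset_succ (n : ℕ) : C.nbhdSkel i₀ z f n ⊆ C.nbhdSkel i₀ z f (n + 1) :=
  subset_union_right.trans subset_union_left

lemma nbhdSkel_mono : Monotone (C.nbhdSkel i₀ z f) :=
  monotone_nat_of_le_succ (nbhdSkel_subset_succ f)

/-- Passing to the next skeleton adds nothing to the lower one: the new pieces are the ball,
which lies in a cell of dimension `n + 1`, and collars, which meet `Xⁿ` only in their base. -/
lemma nbhdSkel_succ_inter_skel (n : ℕ) :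
    C.nbhdSkel i₀ z f (n + 1) ∩ C.skel n = C.nbhdSkel i₀ z f n := by
  refine Subset.antisymm ?_ fun y hy => ⟨nbhdSkel_subset_succ f n hy, nbhdSkel_subset_skel f n hy⟩
  rintro y ⟨(hy | hy) | hy, hyn⟩
  · split_ifs at hy with h
    · exact absurd hyn ((disjoint_openCell_skel (by omega)).notMem_of_mem_left
        (ballNbhd_subset_openCell i₀ z _ hy))
    · exact absurd hy (notMem_empty y)
  · exact hy
  · obtain ⟨e, hy⟩ := mem_iUnion.1 hy
    split_ifs at hy with h
    · rcases collar_subset_union e _ _ hy with hy | hy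
      · exact absurd hyn ((disjoint_openCell_skel (by omega)).notMem_of_mem_left hy)
      · exact hy.1
    · exact absurd hy (notMem_empty y)

lemma nbhdSkel_inter_skel {n m : ℕ} (h : n ≤ m) :
    C.nbhdSkel i₀ z f m ∩ C.skel n = C.nbhdSkel i₀ z f n := by
  induction m, h using Nat.le_induction with
  | base => exact inter_eq_self_of_subset_left (nbhdSkel_subset_skel f n)
  | succ m hm IH =>
    rw [← IH, ← nbhdSkel_succ_inter_skel f m, inter_assoc,
      inter_eq_self_of_subset_right (skel_mono hm)]

lemma nbhd_inter_skel (n : ℕ) : C.nbhd i₀ z f ∩ C.skel n = C.nbhdSkel i₀ z f n := by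
  refine Subset.antisymm ?_ fun y hy => ⟨mem_iUnion_of_mem n hy, nbhdSkel_subset_skel f n hy⟩
  rintro y ⟨hy, hyn⟩
  obtain ⟨m, hm⟩ := mem_iUnion.1 hy
  rcases le_total m n with h | h
  · exact nbhdSkel_mono f h hm
  · exact nbhdSkel_inter_skel f h ▸ ⟨hm, hyn⟩

/-- The paper's cellwise definition of `U_f(x)`, recovered from the recursion over skeleta. -/
lemma nbhd_inter_openCell (e : C.ι) : C.nbhd i₀ z f ∩ C.openCell e =
    (C.ballNbhd i₀ z (f i₀) ∪ C.collar e (f e) (C.nbhd i₀ z f)) ∩ C.openCell e := by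
  rw [← inter_eq_self_of_subset_right (openCell_subset_skel (le_refl (C.dim e))),
    ← inter_assoc, nbhd_inter_skel, inter_eq_self_of_subset_right
      (openCell_subset_skel (le_refl (C.dim e)))]
  obtain ⟨n, hn⟩ | hn : (∃ n, C.dim e = n + 1) ∨ C.dim e = 0 := by
    rcases h : C.dim e with _ | n
    · exact Or.inr rfl
    · exact Or.inl ⟨n, rfl⟩
  · have hcollar : C.collar e (f e) (C.nbhd i₀ z f) = C.collar e (f e) (C.nbhdSkel i₀ z f n) :=
      collar_congr e _ (by
        rw [← nbhd_inter_skel f n, inter_assoc,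
          inter_eq_self_of_subset_right (sphereImage_subset_skel hn.le)])
    rw [hn, nbhdSkel, union_inter_distrib_right, union_inter_distrib_right,
      ite_ballNbhd_inter_openCell i₀ z _ hn, hcollar, union_inter_distrib_right,
      ((disjoint_openCell_skel (by omega)).mono_right
        (nbhdSkel_subset_skel f n)).symm.inter_eq, union_empty]
    congr 1
    ext y
    simp only [mem_inter_iff, mem_iUnion]
    constructor
    · rintro ⟨⟨e', hy⟩, hye⟩
      split_ifs at hy with he'
      · obtain rfl | hne := eq_or_ne e' e
        · exact ⟨hy, hye⟩
        · rcases collar_subset_union e' _ _ hy with hy' | hy'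
          · exact absurd hye ((disjoint_openCell hne).notMem_of_mem_left hy')
          · exact absurd hye ((disjoint_openCell_skel (by omega)).notMem_of_mem_right
              (nbhdSkel_subset_skel f n hy'.1))
      · exact absurd hy (notMem_empty y)
    · rintro ⟨hy, hye⟩
      exact ⟨⟨e, by rwa [if_pos hn]⟩, hye⟩
  · have hcollar : C.collar e (f e) (C.nbhd i₀ z f) = ∅ := by
      rw [collar_congr e _ (S' := ∅) (by rw [sphereImage_eq_empty hn, inter_empty, inter_empty])]
      exact image_eq_empty.2 (eq_empty_of_forall_notMem fun _ ⟨_, _, _, _, h, _⟩ => h)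
    rw [hn, nbhdSkel, ite_ballNbhd_inter_openCell i₀ z _ hn, hcollar, union_empty]

lemma map_mem_nbhd_iff {j : C.ι} {w : EuclideanSpace ℝ (Fin (C.dim j))}
    (hw : w ∈ closedBall 0 1) : C.map j w ∈ C.nbhd i₀ z f ↔
      (w ∈ ball 0 1 ∧ C.map j w ∈ C.ballNbhd i₀ z (f i₀)) ∨
        (f j / (f j + 1) < ‖w‖ ∧ C.map j (‖w‖⁻¹ • w) ∈ C.nbhd i₀ z f) := by
  rcases (mem_closedBall_zero_iff.1 hw).lt_or_eq with hw1 | hw1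
  · have hwb : w ∈ ball 0 1 := mem_ball_zero_iff.2 hw1
    have hwj : C.map j w ∈ C.openCell j := mem_image_of_mem _ hwb
    have hcell := congrArg (C.map j w ∈ ·) (nbhd_inter_openCell (i₀ := i₀) (z := z) f j)
    simp only [mem_inter_iff, mem_union, hwj, and_true, eq_iff_iff] at hcell
    rw [hcell, map_mem_collar_iff hwb, and_iff_right hwb]
  · have hwb : w ∉ ball 0 1 := by rw [mem_ball_zero_iff, hw1]; exact lt_irrefl 1
    rw [hw1, inv_one, one_smul, div_lt_one (by positivity)]
    simp [hwb]

lemma isOpen_ball_inter_preimage_ballNbhd (i₀ : C.ι) (z : EuclideanSpace ℝ (Fin (C.dim i₀)))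
    (j : C.ι) (m : ℕ) :
    IsOpen (ball 0 1 ∩ C.map j ⁻¹' C.ballNbhd i₀ z m) := by
  by_cases h : j = i₀
  · subst h
    rw [ballNbhd, inter_comm, (injOn_ball j).preimage_image_inter
      (ball_min_subset_ball_one z _)]
    exact isOpen_ball
  · convert isOpen_empty
    refine eq_empty_of_forall_notMem fun w ⟨hw, hwB⟩ => ?_
    exact (disjoint_openCell h).ne_of_mem (mem_image_of_mem _ hw)
      (ballNbhd_subset_openCell i₀ z m hwB) rfl

lemma isOpen_radial_preimage (j : C.ι) {a : ℝ} (ha : 0 ≤ a) {W : Set X} (hW : IsOpen W) :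
    IsOpen {w : EuclideanSpace ℝ (Fin (C.dim j)) | a < ‖w‖ ∧ C.map j (‖w‖⁻¹ • w) ∈ W} := by
  have hne : ∀ w ∈ {w : EuclideanSpace ℝ (Fin (C.dim j)) | a < ‖w‖}, ‖w‖ ≠ 0 :=
    fun w hw => (ha.trans_lt hw).ne'
  have hmaps : MapsTo (fun w : EuclideanSpace ℝ (Fin (C.dim j)) => ‖w‖⁻¹ • w)
      {w | a < ‖w‖} (closedBall 0 1) := fun w hw => by
    rw [mem_closedBall_zero_iff, norm_smul, norm_inv, norm_norm, inv_mul_cancel₀ (hne w hw)]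
  have hcont : ContinuousOn (fun w : EuclideanSpace ℝ (Fin (C.dim j)) =>
      C.map j (‖w‖⁻¹ • w)) {w | a < ‖w‖} :=
    (C.continuousOn j).comp ((continuous_norm.continuousOn.inv₀ hne).smul continuousOn_id) hmaps
  exact hcont.isOpen_inter_preimage (isOpen_lt continuous_const continuous_norm) hW

theorem isOpen_nbhd [T2Space X] : IsOpen (C.nbhd i₀ z f) := by
  refine isOpen_of_forall_cell fun j hj => ⟨_,
    (isOpen_ball_inter_preimage_ballNbhd i₀ z j (f i₀)).union
      (isOpen_radial_preimage j (div_add_one_nonneg (f j)) hj.isOpen_compl), ?_⟩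
  ext w
  refine and_congr_right fun hw => ?_
  rw [mem_preimage, map_mem_nbhd_iff f hw]
  refine or_congr Iff.rfl (and_congr_right fun hwa => ?_)
  have hsph : C.map j (‖w‖⁻¹ • w) ∈ C.sphereImage j := mem_image_of_mem _ <| by
    rw [mem_sphere_zero_iff_norm, norm_smul, norm_inv, norm_norm,
      inv_mul_cancel₀ ((div_add_one_nonneg _).trans_lt hwa).ne']
  simp [hsph]

lemma mem_nbhd_self (hz : ‖z‖ < 1) : C.map i₀ z ∈ C.nbhd i₀ z f := by
  have hx := mem_ballNbhd_self hz (f i₀)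
  have : C.map i₀ z ∈ C.nbhd i₀ z f ∩ C.openCell i₀ := by
    rw [nbhd_inter_openCell]
    exact ⟨Or.inl hx, ballNbhd_subset_openCell i₀ z _ hx⟩
  exact this.1

end

lemma nbhdSkel_congr {f f' : C.ι → ℕ} :
    ∀ n, (∀ e, C.dim e ≤ n → f e = f' e) → C.nbhdSkel i₀ z f n = C.nbhdSkel i₀ z f' n
  | 0, h => by
    simp only [nbhdSkel]
    split_ifs with hd
    · rw [h i₀ hd.le]
    · rfl
  | n + 1, h => by
    simp only [nbhdSkel]
    rw [nbhdSkel_congr n fun e he => h e (by omega)]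
    congr 2
    · split_ifs with hd
      · rw [h i₀ hd.le]
      · rfl
    · funext e
      split_ifs with hd
      · rw [h e hd.le]
      · rfl

lemma mem_nbhd_congr {f f' : C.ι → ℕ} {j : C.ι} {y : X} (hy : y ∈ C.openCell j)
    (h : ∀ e, C.dim e ≤ C.dim j → f e = f' e) : y ∈ C.nbhd i₀ z f ↔ y ∈ C.nbhd i₀ z f' := by
  have hyj := openCell_subset_skel (le_refl (C.dim j)) hy
  have key := congrArg (y ∈ ·) (nbhd_inter_skel (i₀ := i₀) (z := z) f (C.dim j))
  have key' := congrArg (y ∈ ·) (nbhd_inter_skel (i₀ := i₀) (z := z) f' (C.dim j))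
  simp only [mem_inter_iff, hyj, and_true, eq_iff_iff] at key key'
  rw [key, key', nbhdSkel_congr _ h]

lemma nbhd_inter_sphereImage_congr {f f' : C.ι → ℕ} {j : C.ι}
    (h : ∀ e, C.dim e < C.dim j → f e = f' e) :
    C.nbhd i₀ z f ∩ C.sphereImage j = C.nbhd i₀ z f' ∩ C.sphereImage j := by
  obtain ⟨F, hF, hsub⟩ := C.closureFinite j
  ext y
  refine and_congr_left fun hy => ?_
  obtain ⟨k, hk, hyk⟩ := mem_iUnion₂.1 (hsub hy)
  exact mem_nbhd_congr hyk fun e he => h e (he.trans_lt (hF k hk))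

lemma nbhd_inter_closedCell_congr {f f' : C.ι → ℕ} {j : C.ι}
    (h : ∀ e, C.dim e ≤ C.dim j → f e = f' e) :
    C.nbhd i₀ z f ∩ C.closedCell j = C.nbhd i₀ z f' ∩ C.closedCell j := by
  rw [closedCell_eq_union, inter_union_distrib_left, inter_union_distrib_left,
    nbhd_inter_sphereImage_congr fun e he => h e he.le]
  congr 1
  ext y
  exact and_congr_left fun hy => mem_nbhd_congr hy h

lemma nbhd_inter_closedCell_subset (f : C.ι → ℕ) (j : C.ι) :
    C.nbhd i₀ z f ∩ C.closedCell j ⊆ C.ballNbhd i₀ z (f i₀) ∪ C.collar j (f j) (C.nbhd i₀ z f) ∪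
      C.nbhd i₀ z f ∩ C.sphereImage j := by
  rw [closedCell_eq_union, inter_union_distrib_left, nbhd_inter_openCell]
  exact union_subset_union_left _ inter_subset_left

lemma exists_closure_image_subset [T2Space X] (j : C.ι)
    {K : Set (EuclideanSpace ℝ (Fin (C.dim j)))} (hK : IsCompact K) (hKb : K ⊆ closedBall 0 1)
    {V : Set X} (hV : IsOpen V) (hKV : MapsTo (C.map j) K V) : ∃ δ > 0, ∀ T ⊆ closedBall 0 1 ∩ cthickening δ K,
      closure (C.map j '' T) ⊆ V := by
  obtain ⟨u, hu, hVu⟩ := continuousOn_iff'.1 (C.continuousOn j) V hV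
  have hKu : K ⊆ u := fun w hw => ((hVu ▸ ⟨hKV hw, hKb hw⟩ : w ∈ u ∩ closedBall 0 1)).1
  obtain ⟨δ, hδ, hδu⟩ := hK.exists_cthickening_subset_open hu hKu
  refine ⟨δ, hδ, fun T hT => ?_⟩
  have hclosed := isClosed_image j (isClosed_closedBall.inter isClosed_cthickening)
    (inter_subset_left (t := cthickening δ K))
  refine (closure_minimal (image_mono hT) hclosed).trans ?_
  rintro _ ⟨w, ⟨hwb, hwK⟩, rfl⟩
  exact ((hVu.symm ▸ ⟨hδu hwK, hwb⟩ : w ∈ C.map j ⁻¹' V ∩ closedBall 0 1)).1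

lemma exists_closure_ballNbhd_subset [T2Space X] (hz : ‖z‖ < 1) {V : Set X} (hV : IsOpen V)
    (hx : C.map i₀ z ∈ V) : ∃ m, closure (C.ballNbhd i₀ z m) ⊆ V := by
  obtain ⟨δ, hδ, hδV⟩ := exists_closure_image_subset i₀ isCompact_singleton
    (singleton_subset_iff.2 (mem_closedBall_zero_iff.2 hz.le)) hV (mapsTo_singleton.2 hx)
  obtain ⟨m, hm⟩ := exists_nat_one_div_lt hδ
  refine ⟨m, hδV _ fun w hw => ⟨ball_subset_closedBall (ball_min_subset_ball_one z _ hw), ?_⟩⟩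
  rw [cthickening_singleton _ hδ.le]
  exact ball_subset_closedBall.trans (closedBall_subset_closedBall
    ((min_le_left _ _).trans hm.le)) hw

lemma exists_closure_collar_subset [T2Space X] {V : Set X} (hV : IsOpen V) {S : Set X}
    {e : C.ι} (h : closure (S ∩ C.sphereImage e) ⊆ V) : ∃ m, closure (C.collar e m S) ⊆ V := by
  set K := sphere (0 : EuclideanSpace ℝ (Fin (C.dim e))) 1 ∩
    C.map e ⁻¹' closure (S ∩ C.sphereImage e)
  have hK : IsCompact K := (isCompact_sphere 0 1).of_isClosed_subset
    (((C.continuousOn e).mono sphere_subset_closedBall).preimage_isClosed_of_isClosed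
      isClosed_sphere isClosed_closure) inter_subset_left
  obtain ⟨δ, hδ, hδV⟩ := exists_closure_image_subset e hK
    (inter_subset_left.trans sphere_subset_closedBall) hV fun w hw => h hw.2
  obtain ⟨m, hm⟩ := exists_nat_one_div_lt hδ
  refine ⟨m, hδV _ ?_⟩
  rintro _ ⟨t, ⟨hta, ht1⟩, u, hu, huS, rfl⟩
  have ht0 : 0 ≤ t := (div_add_one_nonneg m).trans hta.le
  refine ⟨mem_closedBall_zero_iff.2 ?_, mem_cthickening_of_dist_le _ u _ _ ⟨?_, ?_⟩ ?_⟩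
  · rwa [norm_smul, hu, mul_one, Real.norm_of_nonneg ht0]
  · exact mem_sphere_zero_iff_norm.2 hu
  · exact subset_closure ⟨huS, mem_image_of_mem _ (mem_sphere_zero_iff_norm.2 hu)⟩
  · have : (m : ℝ) / (m + 1) = 1 - 1 / (m + 1) := by field_simp; ring
    rw [dist_eq_norm, show t • u - u = (t - 1) • u by rw [sub_smul, one_smul], norm_smul, hu,
      mul_one, Real.norm_of_nonpos (by linarith)]
    linarith

lemma closure_inter_sphereImage_subset {S V : Set X} {e : C.ι}
    (h : ∀ j, C.dim j < C.dim e → closure (S ∩ C.closedCell j) ⊆ V) :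
    closure (S ∩ C.sphereImage e) ⊆ V := by
  obtain ⟨F, hF, hsub⟩ := C.closureFinite e
  have : S ∩ C.sphereImage e ⊆ ⋃ j ∈ F, S ∩ C.closedCell j := fun y ⟨hyS, hy⟩ => by
    obtain ⟨j, hj, hyj⟩ := mem_iUnion₂.1 (hsub hy)
    exact mem_biUnion hj ⟨hyS, openCell_subset_closedCell j hyj⟩
  refine (closure_mono this).trans ?_
  rw [Finset.closure_biUnion]
  exact iUnion₂_subset fun j hj => h j (hF j hj)

end

def ClosuresSubsetBelow (C : CWStruct X) (i₀ : C.ι) (z : EuclideanSpace ℝ (Fin (C.dim i₀)))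
    (V : Set X) (n : ℕ) (f : C.ι → ℕ) : Prop :=
  closure (C.ballNbhd i₀ z (f i₀)) ⊆ V ∧
    ∀ j, C.dim j < n → closure (C.nbhd i₀ z f ∩ C.closedCell j) ⊆ V

section

variable {C : CWStruct X} {i₀ : C.ι} {z : EuclideanSpace ℝ (Fin (C.dim i₀))}

/-- Raising `f` on the cells of dimension `n` (only) makes their collars thin enough. -/
lemma exists_closuresSubsetBelow_succ [T2Space X] {V : Set X} (hV : IsOpen V) {n : ℕ}
    {f : C.ι → ℕ} (hf : C.ClosuresSubsetBelow i₀ z V n f) :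
    ∃ f', C.ClosuresSubsetBelow i₀ z V (n + 1) f' ∧ ∀ e, C.dim e < n → f' e = f e := by
  have hthin : ∀ e, ∃ m, C.dim e = n → closure (C.collar e m (C.nbhd i₀ z f)) ⊆ V := fun e => by
    by_cases he : C.dim e = n
    · obtain ⟨m, hm⟩ := exists_closure_collar_subset hV
        (closure_inter_sphereImage_subset fun j hj => hf.2 j (he ▸ hj))
      exact ⟨m, fun _ => hm⟩
    · exact ⟨0, fun h => absurd h he⟩
  choose m hm using hthin
  set f' : C.ι → ℕ := fun e => if C.dim e = n then max (f e) (m e) else f e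
  have hle : ∀ e, f e ≤ f' e := fun e => by
    simp only [f']
    split_ifs
    exacts [le_max_left _ _, le_rfl]
  have hagree : ∀ e, C.dim e ≠ n → f' e = f e := fun e he => if_neg he
  have hball : closure (C.ballNbhd i₀ z (f' i₀)) ⊆ V :=
    (closure_mono (ballNbhd_anti i₀ z (hle i₀))).trans hf.1
  have hlow : ∀ j, C.dim j < n → closure (C.nbhd i₀ z f' ∩ C.closedCell j) ⊆ V := fun j hj => by
    rw [nbhd_inter_closedCell_congr fun e he => hagree e (by omega)]
    exact hf.2 j hj
  refine ⟨f', ⟨hball, fun j hj => ?_⟩, fun e he => hagree e he.ne⟩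
  rcases (Nat.lt_succ_iff.1 hj).lt_or_eq with hj | hj
  · exact hlow j hj
  have hcollar : C.collar j (f' j) (C.nbhd i₀ z f') ⊆ C.collar j (m j) (C.nbhd i₀ z f) := by
    rw [collar_congr j _ (nbhd_inter_sphereImage_congr fun e he => hagree e (by omega))]
    exact collar_anti j (by simp [f', hj]) _
  refine (closure_mono (nbhd_inter_closedCell_subset f' j)).trans ?_
  simp only [closure_union, union_subset_iff]
  exact ⟨⟨hball, (closure_mono hcollar).trans (hm j hj)⟩,
    closure_inter_sphereImage_subset fun k hk => hlow k (hj ▸ hk)⟩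

theorem exists_nbhd_subset [T2Space X] (hz : ‖z‖ < 1) {V : Set X} (hV : IsOpen V)
    (hx : C.map i₀ z ∈ V) : ∃ f, C.nbhd i₀ z f ⊆ V := by
  obtain ⟨m₀, hm₀⟩ := exists_closure_ballNbhd_subset hz hV hx
  obtain ⟨f, hf⟩ := exists_limit_of_graded_steps C.dim (C.ClosuresSubsetBelow i₀ z V)
    (f₀ := fun _ => m₀) ⟨hm₀, fun _ h => absurd h (Nat.not_lt_zero _)⟩
    fun _ _ => exists_closuresSubsetBelow_succ hV
  refine ⟨f, fun y hy => ?_⟩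
  obtain ⟨j, hyj⟩ := mem_iUnion.1 (C.iUnion_eq.symm ▸ mem_univ y)
  obtain ⟨g, hg, hgf⟩ := hf (C.dim j + 1)
  have hy' : y ∈ C.nbhd i₀ z g ∩ C.closedCell j := by
    rw [nbhd_inter_closedCell_congr fun e he => hgf e (Nat.lt_succ_of_le he)]
    exact ⟨hy, openCell_subset_closedCell j hyj⟩
  exact hg.2 j (Nat.lt_succ_self _) (subset_closure hy')

end

end CWStruct

/-- The sets `U_f(x)`, as `f` ranges over functions `ι → ℕ`, form a neighbourhood base of
open sets at `x`. -/
theorem nbhd_isBasis {X : Type} [TopologicalSpace X] [T2Space X] (C : CWStruct X)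
    (x : X) (i₀ : C.ι) (z : EuclideanSpace ℝ (Fin (C.dim i₀)))
    (hz : ‖z‖ < 1) (hxz : C.map i₀ z = x) :
    (∀ f : C.ι → ℕ, IsOpen (C.nbhd i₀ z f) ∧ x ∈ C.nbhd i₀ z f) ∧
    (∀ V : Set X, IsOpen V → x ∈ V → ∃ f : C.ι → ℕ, C.nbhd i₀ z f ⊆ V) := by
  subst hxz
  exact ⟨fun f => ⟨C.isOpen_nbhd f, C.mem_nbhd_self f hz⟩,
    fun V hV hx => C.exists_nbhd_subset hz hV hx⟩
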